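/- Let (A₁, (f₁,g₁)) and (A₂, (f₂,g₂)) be dibaric algebras and let h : A₁ → A₂ be an algebra homomorphism (a linear map with h(xy) = h(x)h(y) for all x, y). Then f₂ ∘ h = f₁ if and only if g₂ ∘ h = g₁. -/

import Mathlib

/-!
Put `d = g₂ ∘ h - g₁`. Expanding `f₁ (x y) = f₂ (h x · h y)` with both bq-identities gives
`f₁ x * d y + f₁ y * d x = 0`; taking `x = y = a` with `f₁ a ≠ 0` forces `d a = 0`, and then
`y = a` forces `d = 0`. The converse is the same argument with the roles of `f` and `g`
exchanged, the bq-identity being symmetric in them.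
-/

lemma eq_zero_of_mul_add_mul_swap_eq_zero {X K : Type*} [Field K] [NeZero (2 : K)]
    {f d : X → K} (hf : f ≠ 0) (hfd : ∀ x y, f x * d y + f y * d x = 0) : d = 0 := by
  obtain ⟨a, ha⟩ : ∃ a, f a ≠ 0 := Function.ne_iff.mp hf
  have hda : d a = 0 := by
    have h2 : (2 : K) * (f a * d a) = 0 := by linear_combination hfd a a
    simpa [ha, two_ne_zero] using h2
  funext x
  simpa [hda, ha] using hfd x a

lemma comp_eq_of_comp_eq_of_bq {X₁ X₂ K : Type*} [Field K] [NeZero (2 : K)]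
    (mul₁ : X₁ → X₁ → X₁) (mul₂ : X₂ → X₂ → X₂) {f₁ g₁ : X₁ → K} {f₂ g₂ : X₂ → K}
    (hf₁ : f₁ ≠ 0) (hbq₁ : ∀ x y, f₁ (mul₁ x y) = (f₁ x * g₁ y + f₁ y * g₁ x) / 2)
    (hbq₂ : ∀ x y, f₂ (mul₂ x y) = (f₂ x * g₂ y + f₂ y * g₂ x) / 2)
    {h : X₁ → X₂} (hhom : ∀ x y, h (mul₁ x y) = mul₂ (h x) (h y))
    (hf : ∀ x, f₂ (h x) = f₁ x) : ∀ x, g₂ (h x) = g₁ x := by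
  have hfd : ∀ x y, f₁ x * (g₂ (h y) - g₁ y) + f₁ y * (g₂ (h x) - g₁ x) = 0 := by
    intro x y
    have e : f₁ (mul₁ x y) = (f₁ x * g₂ (h y) + f₁ y * g₂ (h x)) / 2 := by
      rw [← hf, hhom, hbq₂, hf, hf]
    have e' := e.symm.trans (hbq₁ x y)
    rw [div_left_inj' two_ne_zero] at e'
    linear_combination e'
  intro x
  exact sub_eq_zero.mp (congrFun (eq_zero_of_mul_add_mul_swap_eq_zero hf₁ hfd) x)

theorem stmt_11 (A₁ A₂ : Type*) [AddCommGroup A₁] [Module ℝ A₁]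
    [AddCommGroup A₂] [Module ℝ A₂]
    (mul₁ : A₁ →ₗ[ℝ] A₁ →ₗ[ℝ] A₁) (mul₂ : A₂ →ₗ[ℝ] A₂ →ₗ[ℝ] A₂)
    (f₁ g₁ : A₁ →ₗ[ℝ] ℝ) (hf₁ : f₁ ≠ 0) (hg₁ : g₁ ≠ 0)
    (hbq₁ : ∀ x y : A₁, f₁ (mul₁ x y) = (f₁ x * g₁ y + f₁ y * g₁ x) / 2 ∧
                        g₁ (mul₁ x y) = (f₁ x * g₁ y + f₁ y * g₁ x) / 2)
    (f₂ g₂ : A₂ →ₗ[ℝ] ℝ)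
    (hbq₂ : ∀ x y : A₂, f₂ (mul₂ x y) = (f₂ x * g₂ y + f₂ y * g₂ x) / 2 ∧
                        g₂ (mul₂ x y) = (f₂ x * g₂ y + f₂ y * g₂ x) / 2)
    (h : A₁ →ₗ[ℝ] A₂)
    (hhom : ∀ x y : A₁, h (mul₁ x y) = mul₂ (h x) (h y)) :
    (∀ x : A₁, f₂ (h x) = f₁ x) ↔ (∀ x : A₁, g₂ (h x) = g₁ x) := by
  constructor
  · exact comp_eq_of_comp_eq_of_bq (fun x y ↦ mul₁ x y) (fun x y ↦ mul₂ x y)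
      (DFunLike.coe_injective.ne hf₁) (fun x y ↦ (hbq₁ x y).1) (fun x y ↦ (hbq₂ x y).1) hhom
  · exact comp_eq_of_comp_eq_of_bq (fun x y ↦ mul₁ x y) (fun x y ↦ mul₂ x y)
      (DFunLike.coe_injective.ne hg₁) (fun x y ↦ by rw [(hbq₁ x y).2]; ring)
      (fun x y ↦ by rw [(hbq₂ x y).2]; ring) hhom
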